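/- A binary word is a primitive (lower or upper) Christoffel word if and only if it is balanced and unbordered. -/

import Mathlib

/-- A word is primitive if it is not a proper power: `w = v^n` implies `n = 1`. -/
def Primitive {α : Type*} (w : List α) : Prop :=
  ∀ (v : List α) (n : ℕ), w = (List.replicate n v).flatten → n = 1

/-- A Lyndon word: nonempty and lexicographically strictly smaller than all
its proper nonempty suffixes. -/
def Lyndon {α : Type*} [LinearOrder α] (w : List α) : Prop :=
  w ≠ [] ∧ ∀ u v : List α, w = u ++ v → u ≠ [] → v ≠ [] → List.Lex (· < ·) w v

/-- A Lyndon word for the reversed order `1 < 0` on `Bool`. -/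
def LyndonRev (w : List Bool) : Prop :=
  w ≠ [] ∧ ∀ u v : List Bool, w = u ++ v → u ≠ [] → v ≠ [] → List.Lex (· > ·) w v

/-- A binary word is balanced if the numbers of `1`s in any two factors of the
same length differ by at most 1. (`false` plays the role of `0`, `true` of `1`.) -/
def Balanced01 (w : List Bool) : Prop :=
  ∀ u v : List Bool, u <:+: w → v <:+: w → u.length = v.length →
    (u.count true : ℤ) - (v.count true : ℤ) ≤ 1

/-- `w` has period `p`: `w[i] = w[i+p]` for all valid indices. -/
def HasPeriod (w : List Bool) (p : ℕ) : Prop :=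
  ∀ i : ℕ, i + p < w.length → w[i]? = w[i + p]?

/-- A central word: it has coprime periods `p`, `q` and length `p + q - 2`. -/
def Central (w : List Bool) : Prop :=
  ∃ p q : ℕ, Nat.Coprime p q ∧ HasPeriod w p ∧ HasPeriod w q ∧ w.length + 2 = p + q

/-- The lower Christoffel word of slope `b/a`: letter `i` is `1` (`true`) iff the
line `y = bx/(a+b)`... encoded via floor differences `⌊(i+1)b/(a+b)⌋ - ⌊ib/(a+b)⌋`. -/
def chr (a b : ℕ) : List Bool :=
  List.ofFn (fun i : Fin (a + b) =>
    decide ((i : ℕ) * b / (a + b) < ((i : ℕ) + 1) * b / (a + b)))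

/-- An (upward) digitally convex word: all factors of its Lyndon factorization
(for the order `0 < 1`) are balanced Lyndon words, i.e. primitive lower
Christoffel words. -/
def DC (w : List Bool) : Prop :=
  ∃ L : List (List Bool), L.flatten = w ∧ (∀ x ∈ L, Lyndon x ∧ Balanced01 x) ∧
    L.Chain' (fun a b => ¬ List.Lex (· < ·) a b)

/-- A downward digitally convex word: all factors of its Lyndon factorization
for the order `1 < 0` are balanced. -/
def DCdown (w : List Bool) : Prop :=
  ∃ L : List (List Bool), L.flatten = w ∧ (∀ x ∈ L, LyndonRev x ∧ Balanced01 x) ∧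
    L.Chain' (fun a b => ¬ List.Lex (· > ·) a b)

/-- `(u, v)` is the standard factorization of `u ++ v`: both parts nonempty and
`v` is the lexicographically least proper nonempty suffix of `u ++ v`. -/
def StdFact (u v : List Bool) : Prop :=
  u ≠ [] ∧ v ≠ [] ∧
    ∀ s : List Bool, s ≠ [] → s ≠ u ++ v → s <:+ u ++ v →
      s = v ∨ List.Lex (· < ·) v s

/-- A word is unbordered if it has no nonempty proper border. -/
def Unbordered (w : List Bool) : Prop :=
  ∀ u : List Bool, u <+: w → u <:+ w → u ≠ w → u = []

/-!
Counting ones in prefixes settles one direction: the prefix of length `k` of `chr a b` has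
`⌊kb/(a+b)⌋` ones, so factors of equal length differ by at most one, and a border of length `k`
would force `⌊kb/n⌋ + ⌊(n-k)b/n⌋ = b`, impossible when `n = a + b` is coprime to `b`.

Conversely, let `w` be balanced, unbordered and end with `1`. Balance forbids having both `00`
and `11` as factors; up to the reverse-complement symmetry, which fixes the Christoffel words,
`w` has no factor `11` and so is the image of a shorter word `v` under `0 ↦ 0, 1 ↦ 01`.
Unborderedness passes to `v` directly, and balance too: an unbalanced word has factors `0z0` and
`1z1`, whose images contain the unbalanced pair `0G(z)00`, `1G(z)01`. By induction `v` is a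
Christoffel word, and the morphism maps `chr x y` to `chr (x + y) y`.
-/

def prefixCount (w : List Bool) (k : ℕ) : ℕ := (w.take k).count true

@[simp] lemma prefixCount_zero (w : List Bool) : prefixCount w 0 = 0 := rfl

@[simp] lemma prefixCount_cons_succ (a : Bool) (w : List Bool) (k : ℕ) :
    prefixCount (a :: w) (k + 1) = prefixCount w k + if a then 1 else 0 := by
  cases a <;> simp [prefixCount]

lemma prefixCount_succ {w : List Bool} {i : ℕ} (h : i < w.length) :
    prefixCount w (i + 1) = prefixCount w i + if w[i] then 1 else 0 := by
  cases hi : w[i] <;> simp [prefixCount, List.take_add_one, List.getElem?_eq_getElem h, hi]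

lemma prefixCount_append_length (x y : List Bool) :
    prefixCount (x ++ y) x.length = x.count true := by
  simp [prefixCount]

lemma prefixCount_of_length_le {w : List Bool} {k : ℕ} (h : w.length ≤ k) :
    prefixCount w k = w.count true := by
  simp [prefixCount, List.take_of_length_le h]

lemma prefixCount_append (x y : List Bool) (k : ℕ) :
    prefixCount (x ++ y) k = prefixCount x k + prefixCount y (k - x.length) := by
  simp [prefixCount, List.take_append]

lemma List.IsPrefix.count_true_eq_prefixCount {u w : List Bool} (h : u <+: w) :
    u.count true = prefixCount w u.length := by
  obtain ⟨t, rfl⟩ := h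
  rw [prefixCount_append_length]

lemma eq_of_prefixCount_eq {v w : List Bool} (hl : v.length = w.length)
    (h : ∀ k ≤ v.length, prefixCount v k = prefixCount w k) : v = w := by
  refine List.ext_getElem hl fun i hv hw => ?_
  have := prefixCount_succ hv
  rw [h i hv.le, h (i + 1) hv, prefixCount_succ hw] at this
  cases hi : v[i] <;> cases hj : w[i] <;> simp_all

lemma length_chr (a b : ℕ) : (chr a b).length = a + b := by simp [chr]

lemma prefixCount_chr {a b k : ℕ} (hk : k ≤ a + b) :
    prefixCount (chr a b) k = k * b / (a + b) := by
  induction k with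
  | zero => simp
  | succ k ih =>
    have hk' : k < (chr a b).length := by rw [length_chr]; omega
    have hmono : k * b / (a + b) ≤ (k + 1) * b / (a + b) :=
      Nat.div_le_div_right (Nat.mul_le_mul_right _ k.le_succ)
    -- each step raises `⌊kb/n⌋` by at most one, because `b ≤ n`
    have hstep : (k + 1) * b / (a + b) ≤ k * b / (a + b) + 1 := by
      calc (k + 1) * b / (a + b) ≤ (k * b + (a + b)) / (a + b) :=
            Nat.div_le_div_right (by rw [Nat.succ_mul]; omega)
        _ = k * b / (a + b) + 1 := Nat.add_div_right _ (by omega)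
    rw [prefixCount_succ hk', ih (by omega)]
    simp only [chr, List.getElem_ofFn, decide_eq_true_eq]
    split_ifs <;> omega

lemma count_true_chr (a b : ℕ) : (chr a b).count true = b := by
  rcases Nat.eq_zero_or_pos (a + b) with h | h
  · obtain ⟨rfl, rfl⟩ : a = 0 ∧ b = 0 := by omega
    rfl
  · rw [← prefixCount_of_length_le (length_chr a b).le, prefixCount_chr le_rfl,
      Nat.mul_div_cancel_left _ h]

lemma eq_chr_of_prefixCount {w : List Bool} {a b : ℕ} (hl : w.length = a + b)
    (h : ∀ k ≤ a + b, prefixCount w k = k * b / (a + b)) : w = chr a b :=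
  eq_of_prefixCount_eq (by rw [hl, length_chr]) fun k hk => by
    rw [hl] at hk; rw [h k hk, prefixCount_chr hk]

lemma Nat.div_add_div_add_ite_dvd {x y m n : ℕ} (hn : 0 < n) (h : x + y = m * n) :
    x / n + y / n + (if n ∣ x then 0 else 1) = m := by
  have hm : (x + y) / n = m := by rw [h, Nat.mul_div_cancel _ hn]
  split_ifs with hx
  · rw [← Nat.add_div_of_dvd_right hx, hm, add_zero]
  · rw [← Nat.add_div_eq_of_le_mod_add_mod
      (Nat.le_mod_add_mod_of_dvd_add_of_not_dvd ⟨m, by rw [h, mul_comm]⟩ hx) hn, hm]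

lemma balanced_chr (a b : ℕ) : Balanced01 (chr a b) := by
  -- a factor of length `k` after `i` letters has `⌊(i+k)b/n⌋ - ⌊ib/n⌋ ∈ {⌊kb/n⌋, ⌊kb/n⌋ + 1}` ones
  have hfactor : ∀ s u t, s ++ u ++ t = chr a b →
      u.length * b / (a + b) ≤ u.count true ∧ u.count true ≤ u.length * b / (a + b) + 1 := by
    intro s u t h
    have hlen : s.length + u.length ≤ a + b := by
      rw [← length_chr a b, ← h]; simp
    have hs := prefixCount_append_length s (u ++ t)
    have hsu := prefixCount_append_length (s ++ u) t
    rw [← List.append_assoc, h, prefixCount_chr (by omega)] at hs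
    rw [h, List.length_append, prefixCount_chr hlen, List.count_append, add_mul] at hsu
    have := Nat.div_add_div_le_add_div (x := s.length * b) (y := u.length * b) (z := a + b)
    have := Nat.add_div_le_div_add_div_add_one (s.length * b) (u.length * b) (a + b)
    omega
  rintro u v ⟨s, t, hu⟩ ⟨s', t', hv⟩ hl
  have := hfactor s u t hu
  have := hfactor s' v t' hv
  rw [hl] at *
  omega

lemma unbordered_chr {a b : ℕ} (hab : a.Coprime b) : Unbordered (chr a b) := by
  intro u hpre ⟨s, hs⟩ hne
  by_contra hu
  have hk : 0 < u.length := List.length_pos_iff.2 hu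
  have hkn : u.length < a + b := by
    rw [← length_chr a b]
    exact lt_of_le_of_ne hpre.length_le fun h => hne (hpre.eq_of_length h)
  have hsl : s.length + u.length = a + b := by rw [← length_chr a b, ← hs, List.length_append]
  -- counting the ones of `u` as a prefix and as a suffix gives `⌊kb/n⌋ + ⌊(n-k)b/n⌋ = b`,
  -- which fails since `n ∤ kb`
  have hpre' := hpre.count_true_eq_prefixCount
  have hsuf := count_true_chr a b
  rw [prefixCount_chr hkn.le] at hpre'
  rw [← hs, List.count_append, ← prefixCount_append_length s u, hs,
    prefixCount_chr (by omega)] at hsuf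
  have hndvd : ¬ (a + b) ∣ u.length * b := fun hdvd =>
    hk.ne' (Nat.eq_zero_of_dvd_of_lt
      ((Nat.coprime_add_self_right.2 hab.symm).symm.dvd_of_dvd_mul_right hdvd) hkn)
  have := Nat.div_add_div_add_ite_dvd (x := u.length * b) (y := s.length * b) (m := b) (n := a + b)
    (by omega) (by rw [← add_mul, add_comm, hsl, mul_comm])
  rw [if_neg hndvd] at this
  omega

lemma prefixCount_flatten_replicate_chr (a b d : ℕ) {k : ℕ} (hk : k ≤ d * (a + b)) :
    prefixCount (List.replicate d (chr a b)).flatten k = k * b / (a + b) := by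
  induction d generalizing k with
  | zero => simp_all
  | succ d ih =>
    rw [List.replicate_succ, List.flatten_cons, prefixCount_append, length_chr]
    rcases le_or_gt k (a + b) with h | h
    · simp [prefixCount_chr h, Nat.sub_eq_zero_of_le h]
    · have hn : 0 < a + b := Nat.pos_of_ne_zero fun h0 => by simp [h0] at hk; omega
      obtain ⟨j, rfl⟩ : ∃ j, k = j + (a + b) := ⟨k - (a + b), by omega⟩
      rw [prefixCount_of_length_le (by rw [length_chr]; omega), count_true_chr,
        Nat.add_sub_cancel, ih (by rw [add_one_mul] at hk; omega), add_mul,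
        Nat.add_mul_div_left _ _ hn, add_comm]

lemma chr_mul (d a b : ℕ) : chr (d * a) (d * b) = (List.replicate d (chr a b)).flatten := by
  rcases Nat.eq_zero_or_pos d with rfl | hd
  · simp [chr]
  refine (eq_chr_of_prefixCount (by simp [length_chr]; ring) fun k hk => ?_).symm
  rw [← mul_add] at hk ⊢
  rw [prefixCount_flatten_replicate_chr a b d hk, mul_left_comm, Nat.mul_div_mul_left _ _ hd]

lemma coprime_of_primitive_chr {a b : ℕ} (h : Primitive (chr a b)) : a.Coprime b := by
  have hrep := chr_mul (a.gcd b) (a / a.gcd b) (b / a.gcd b)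
  rw [Nat.mul_div_cancel' (a.gcd_dvd_left b), Nat.mul_div_cancel' (a.gcd_dvd_right b)] at hrep
  exact h _ _ hrep

lemma Primitive.of_reverse {w : List Bool} (h : Primitive w.reverse) : Primitive w :=
  fun v n hw => h v.reverse n (by simp [hw, List.reverse_flatten])

lemma Unbordered.primitive {w : List Bool} (h : Unbordered w) (hw : w ≠ []) : Primitive w := by
  rintro v (_ | _ | n) rfl
  · simp at hw
  · rfl
  · obtain ⟨u, hu⟩ : ∃ u, u = (List.replicate (n + 1) v).flatten := ⟨_, rfl⟩
    have hpre : u ++ v = (List.replicate (n + 2) v).flatten := by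
      rw [hu, List.replicate_succ' (n := n + 1), List.flatten_append]; simp
    have hsuf : v ++ u = (List.replicate (n + 2) v).flatten := by
      rw [hu, List.replicate_succ (n := n + 1), List.flatten_cons]
    by_cases huw : u = (List.replicate (n + 2) v).flatten
    · rw [← huw] at hpre
      simp_all
    · have := h u ⟨v, hpre⟩ ⟨v, hsuf⟩ huw
      simp_all

lemma Balanced01.reverse {w : List Bool} (h : Balanced01 w) : Balanced01 w.reverse := by
  intro u v hu hv hl
  simpa using h u.reverse v.reverse (by simpa using hu.reverse) (by simpa using hv.reverse)
    (by simpa using hl)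

lemma Unbordered.reverse {w : List Bool} (h : Unbordered w) : Unbordered w.reverse := by
  intro u hpre hsuf hne
  simpa using h u.reverse (by simpa using List.reverse_prefix.2 hsuf)
    (by simpa using List.reverse_suffix.2 hpre) (by rintro rfl; simp at hne)

def revCompl (w : List Bool) : List Bool := (w.map not).reverse

@[simp] lemma revCompl_revCompl (w : List Bool) : revCompl (revCompl w) = w := by
  simp [revCompl, List.map_reverse, Function.comp_def]

@[simp] lemma length_revCompl (w : List Bool) : (revCompl w).length = w.length := by
  simp [revCompl]

@[simp] lemma revCompl_eq_nil {w : List Bool} : revCompl w = [] ↔ w = [] := by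
  simp [revCompl]

@[simp] lemma count_true_revCompl (w : List Bool) : (revCompl w).count true = w.count false := by
  simpa [revCompl] using List.count_map_of_injective w not Bool.not_injective false

@[simp] lemma count_false_revCompl (w : List Bool) :
    (revCompl w).count false = w.count true := by
  simpa [revCompl] using List.count_map_of_injective w not Bool.not_injective true

lemma head?_revCompl (w : List Bool) : (revCompl w).head? = w.getLast?.map not := by
  simp [revCompl, List.getLast?_map]

lemma getLast?_revCompl (w : List Bool) : (revCompl w).getLast? = w.head?.map not := by
  simp [revCompl]

lemma List.IsInfix.revCompl {u w : List Bool} (h : u <:+: w) : revCompl u <:+: revCompl w :=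
  (h.map not).reverse

lemma List.IsPrefix.revCompl {u w : List Bool} (h : u <+: w) : revCompl u <:+ revCompl w :=
  List.reverse_suffix.2 (h.map not)

lemma List.IsSuffix.revCompl {u w : List Bool} (h : u <:+ w) : revCompl u <+: revCompl w :=
  List.reverse_prefix.2 (h.map not)

lemma balanced01_revCompl {w : List Bool} (h : Balanced01 w) : Balanced01 (revCompl w) := by
  intro u v hu hv hl
  have := h _ _ (by simpa using hv.revCompl) (by simpa using hu.revCompl)
    (by simpa using hl.symm)
  have := List.count_true_add_count_false u
  have := List.count_true_add_count_false v
  simp only [count_true_revCompl] at *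
  omega

lemma Unbordered.revCompl {w : List Bool} (h : Unbordered w) : Unbordered (revCompl w) := by
  intro u hpre hsuf hne
  have := h _ (by simpa using hsuf.revCompl) (by simpa using hpre.revCompl)
    (by rintro rfl; simp at hne)
  simpa using this

lemma prefixCount_revCompl {w : List Bool} {k : ℕ} (hk : k ≤ w.length) :
    prefixCount (revCompl w) k + w.count true = k + prefixCount w (w.length - k) := by
  have htake : (revCompl w).take k = revCompl (w.drop (w.length - k)) := by
    simp [revCompl, List.take_reverse, List.map_drop]
  have hcount := List.count_true_add_count_false (w.drop (w.length - k))
  have hsplit :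
      w.count true = prefixCount w (w.length - k) + (w.drop (w.length - k)).count true := by
    rw [prefixCount, ← List.count_append, List.take_append_drop]
  rw [List.length_drop] at hcount
  rw [prefixCount, htake, count_true_revCompl]
  omega

lemma revCompl_chr (a b : ℕ) : revCompl (chr b a) = chr a b := by
  rcases Nat.eq_zero_or_pos (a + b) with h | hn
  · obtain ⟨rfl, rfl⟩ : a = 0 ∧ b = 0 := by omega
    rfl
  refine eq_chr_of_prefixCount (by rw [length_revCompl, length_chr, add_comm]) fun k hk => ?_
  have hrc := prefixCount_revCompl (w := chr b a) (k := k) (by rw [length_chr]; omega)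
  rw [length_chr, count_true_chr, prefixCount_chr (by omega), Nat.add_comm b a] at hrc
  -- both `⌊ka/n⌋ + ⌊kb/n⌋` and `⌊ka/n⌋ + ⌊(n-k)a/n⌋` fall short of `k`, resp. `a`,
  -- by the same defect `[n ∤ ka]`
  have h1 := Nat.div_add_div_add_ite_dvd (x := k * a) (y := k * b) (m := k) hn (by ring)
  have h2 := Nat.div_add_div_add_ite_dvd (x := k * a) (y := (a + b - k) * a) (m := a) hn
    (by rw [← add_mul, Nat.add_sub_cancel' hk, mul_comm])
  split_ifs at h1 h2 <;> omega

/-- On lattice paths this is the shear `(x, y) ↦ (x + y, y)`. -/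
def morphG (w : List Bool) : List Bool := w.flatMap fun x => if x then [false, true] else [false]

@[simp] lemma morphG_nil : morphG [] = [] := rfl

@[simp] lemma morphG_cons (a : Bool) (w : List Bool) :
    morphG (a :: w) = (if a then [false, true] else [false]) ++ morphG w := rfl

@[simp] lemma morphG_append (v w : List Bool) : morphG (v ++ w) = morphG v ++ morphG w :=
  List.flatMap_append

@[simp] lemma length_morphG (w : List Bool) : (morphG w).length = w.length + w.count true := by
  induction w with
  | nil => rfl
  | cons a w ih => cases a <;> simp [ih] <;> omega

@[simp] lemma count_true_morphG (w : List Bool) : (morphG w).count true = w.count true := by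
  induction w with
  | nil => rfl
  | cons a w ih => cases a <;> simp [ih]

@[simp] lemma count_false_morphG (w : List Bool) : (morphG w).count false = w.length := by
  induction w with
  | nil => rfl
  | cons a w ih => cases a <;> simp [ih]

@[simp] lemma morphG_eq_nil {w : List Bool} : morphG w = [] ↔ w = [] := by
  cases w with
  | nil => simp
  | cons a w => cases a <;> simp

lemma getLast?_morphG (w : List Bool) : (morphG w).getLast? = w.getLast? := by
  rcases List.eq_nil_or_concat' w with rfl | ⟨v, a, rfl⟩
  · rfl
  · cases a <;> simp

lemma exists_morphG_eq :
    ∀ w : List Bool, w.head? ≠ some true → ¬ [true, true] <:+: w → ∃ v, morphG v = w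
  | [], _, _ => ⟨[], rfl⟩
  | [false], _, _ => ⟨[false], rfl⟩
  | false :: false :: w, _, h11 => by
    obtain ⟨v, hv⟩ := exists_morphG_eq (false :: w) (by simp)
      fun h => h11 (h.trans (List.suffix_cons _ _).isInfix)
    exact ⟨false :: v, by simp [hv]⟩
  | false :: true :: w, _, h11 => by
    obtain ⟨v, hv⟩ := exists_morphG_eq w
      (fun h => by obtain ⟨w, rfl⟩ := List.head?_eq_some_iff.1 h; exact h11 ⟨[false], w, rfl⟩)
      fun h => h11 (h.trans (List.suffix_append [false, true] w).isInfix)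
    exact ⟨true :: v, by simp [hv]⟩
  | true :: _, h, _ => absurd rfl h

lemma unbordered_of_morphG {w : List Bool} (h : Unbordered (morphG w)) : Unbordered w := by
  rintro u ⟨t, rfl⟩ ⟨s, hs⟩ hne
  have hG := h (morphG u) ⟨morphG t, by simp⟩ ⟨morphG s, by rw [← morphG_append, hs]⟩
    fun heq => hne (by simpa using heq)
  simpa using hG

mutual

lemma exists_infix_of_count_lt :
    ∀ z₀ u v : List Bool, u.length = v.length → v.count true < u.count true →
      ∃ z, true :: (z ++ [true]) <:+: true :: (z₀ ++ u) ∧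
        false :: (z ++ [false]) <:+: false :: (z₀ ++ v)
  | _, [], [], _, h => by simp at h
  | z₀, true :: u, false :: v, _, _ => ⟨z₀, ⟨[], u, by simp⟩, ⟨[], v, by simp⟩⟩
  | z₀, true :: u, true :: v, hl, h => by
    obtain ⟨z, hu, hv⟩ := exists_infix_of_count_lt (z₀ ++ [true]) u v (by simpa using hl)
      (by simpa [List.count_cons] using h)
    exact ⟨z, by simpa using hu, by simpa using hv⟩
  | z₀, false :: u, false :: v, hl, h => by
    obtain ⟨z, hu, hv⟩ := exists_infix_of_count_lt (z₀ ++ [false]) u v (by simpa using hl)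
      (by simpa [List.count_cons] using h)
    exact ⟨z, by simpa using hu, by simpa using hv⟩
  | z₀, false :: u, true :: v, hl, h => by
    obtain ⟨z, hu, hv⟩ := exists_infix_of_count_add_two_le u v (by simpa using hl)
      (by simp at h; omega)
    exact ⟨z, hu.trans ⟨true :: z₀ ++ [false], [], by simp⟩,
      hv.trans ⟨false :: z₀ ++ [true], [], by simp⟩⟩

lemma exists_infix_of_count_add_two_le :
    ∀ u v : List Bool, u.length = v.length → v.count true + 2 ≤ u.count true →
      ∃ z, true :: (z ++ [true]) <:+: u ∧ false :: (z ++ [false]) <:+: v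
  | [], [], _, h => by simp at h
  | a :: u, b :: v, hl, h => by
    by_cases hab : a = true ∧ b = false
    · obtain ⟨rfl, rfl⟩ := hab
      exact exists_infix_of_count_lt [] u v (by simpa using hl) (by simp at h; omega)
    obtain ⟨z, hu, hv⟩ := exists_infix_of_count_add_two_le u v (by simpa using hl)
      (by cases a <;> cases b <;> simp at h hab ⊢ <;> omega)
    exact ⟨z, hu.trans (List.suffix_cons a u).isInfix, hv.trans (List.suffix_cons b v).isInfix⟩

end

lemma exists_infix_of_not_balanced {w : List Bool} (h : ¬ Balanced01 w) :
    ∃ z, true :: (z ++ [true]) <:+: w ∧ false :: (z ++ [false]) <:+: w := by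
  simp only [Balanced01, not_forall, not_le] at h
  obtain ⟨u, v, hu, hv, hl, hc⟩ := h
  obtain ⟨z, hzu, hzv⟩ := exists_infix_of_count_add_two_le u v hl (by omega)
  exact ⟨z, hzu.trans hu, hzv.trans hv⟩

lemma balanced_of_morphG {w : List Bool} (h : Balanced01 (morphG w))
    (hw : w.getLast? = some true) : Balanced01 w := by
  by_contra hb
  obtain ⟨z, ⟨s, t, hone⟩, ⟨s', t', hzero⟩⟩ := exists_infix_of_not_balanced hb
  -- `0z0` is not a suffix, so it is followed by a letter whose image starts with `0`
  obtain ⟨c, t', rfl⟩ : ∃ c t'', t' = c :: t'' := by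
    rcases t' with _ | ⟨c, t''⟩
    · rw [← hzero] at hw; simp [List.getLast?_cons] at hw
    · exact ⟨c, t'', rfl⟩
  have hU : true :: (morphG z ++ [false, true]) <:+: morphG w :=
    ⟨morphG s ++ [false], morphG t, by rw [← hone]; simp⟩
  have hV : false :: (morphG z ++ [false, false]) <:+: morphG w :=
    ⟨morphG s', (if c then [true] else []) ++ morphG t', by rw [← hzero]; cases c <;> simp⟩
  have := h _ _ hU hV (by simp)
  simp at this
  omega

lemma exists_prefixCount_morphG (w : List Bool) {k : ℕ} (hk : k ≤ (morphG w).length) :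
    ∃ j ≤ w.length, ∃ e ≤ 1, k = j + prefixCount w j + e ∧
      prefixCount (morphG w) k = prefixCount w j := by
  induction w generalizing k with
  | nil => exact ⟨0, le_rfl, 0, zero_le_one, by simpa using hk, by simp [prefixCount]⟩
  | cons a w ih =>
    rcases k with _ | k
    · exact ⟨0, Nat.zero_le _, 0, zero_le_one, by simp, by simp⟩
    cases a
    · obtain ⟨j, hj, e, he, rfl, hG⟩ := ih (k := k) (by simpa using hk)
      exact ⟨j + 1, by simpa using hj, e, he, by simp; omega, by simpa using hG⟩
    rcases k with _ | k
    · exact ⟨0, Nat.zero_le _, 1, le_rfl, by simp, by simp⟩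
    · obtain ⟨j, hj, e, he, rfl, hG⟩ := ih (k := k) (by simp at hk ⊢; omega)
      exact ⟨j + 1, by simpa using hj, e, he, by simp; omega, by simpa using hG⟩

lemma morphG_chr (x y : ℕ) : morphG (chr x y) = chr (x + y) y := by
  rcases Nat.eq_zero_or_pos (x + y) with h | hm
  · obtain ⟨rfl, rfl⟩ : x = 0 ∧ y = 0 := by omega
    rfl
  refine eq_chr_of_prefixCount (by simp [length_chr, count_true_chr]) fun k hk => ?_
  obtain ⟨j, hj, e, he, rfl, hG⟩ :=
    exists_prefixCount_morphG (chr x y) (k := k) (by simpa [length_chr, count_true_chr] using hk)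
  rw [length_chr] at hj
  rw [hG, prefixCount_chr hj]
  have hlo := Nat.div_mul_le_self (j * y) (x + y)
  have hhi := Nat.lt_mul_div_succ (j * y) hm
  have hey : e * y ≤ y := by nlinarith
  symm
  apply Nat.div_eq_of_lt_le <;> nlinarith

lemma Unbordered.head?_eq_not {w : List Bool} (h : Unbordered w) (hw : 2 ≤ w.length) {c : Bool}
    (hc : w.getLast? = some c) : w.head? = some !c := by
  obtain ⟨s, rfl⟩ := List.getLast?_eq_some_iff.1 hc
  obtain ⟨x, s, rfl⟩ := List.exists_cons_of_ne_nil (l := s) (by rintro rfl; simp at hw)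
  have hx : x ≠ c := by
    rintro rfl
    have := h [x] ⟨s ++ [x], rfl⟩ ⟨x :: s, rfl⟩ (by simp)
    simp at this
  cases x <;> cases c <;> simp_all

lemma eq_chr_of_balanced_of_unbordered {w : List Bool} (hb : Balanced01 w) (hu : Unbordered w)
    (hl : w.getLast? = some true) : w = chr (w.count false) (w.count true) := by
  induction hn : w.length using Nat.strong_induction_on generalizing w with
  | _ n ih =>
  have desubst : ∀ v : List Bool, v.length = n → Balanced01 v → Unbordered v →
      v.getLast? = some true → v.head? = some false → ¬ [true, true] <:+: v →
      v = chr (v.count false) (v.count true) := by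
    intro v hv hb hu hl hh h11
    obtain ⟨v, rfl⟩ := exists_morphG_eq v (by simp [hh]) h11
    rw [getLast?_morphG] at hl
    have hpos : 0 < v.count true := List.count_pos_iff.2 (List.mem_of_getLast? hl)
    have hv' := ih v.length (by simp at hv; omega) (balanced_of_morphG hb hl)
      (unbordered_of_morphG hu) hl rfl
    rw [count_false_morphG, count_true_morphG, ← List.count_true_add_count_false, add_comm,
      ← morphG_chr, ← hv']
  rcases Nat.lt_or_ge n 2 with hn2 | hn2
  · obtain ⟨s, rfl⟩ := List.getLast?_eq_some_iff.1 hl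
    obtain rfl : s = [] := by simpa [← hn] using hn2
    rfl
  have hh := hu.head?_eq_not (hn ▸ hn2) hl
  by_cases h11 : [true, true] <:+: w
  · -- balance forbids `00` next to `11`, so `revCompl w` has no factor `11`
    have h11' : ¬ [true, true] <:+: revCompl w := fun h => by
      have h00 : revCompl [true, true] <:+: w := by simpa using h.revCompl
      have := hb [true, true] [false, false] h11 h00 rfl
      simp at this
    have hrc := desubst (revCompl w) (by simp [hn]) (balanced01_revCompl hb) hu.revCompl
      (by simp [getLast?_revCompl, hh]) (by simp [head?_revCompl, hl]) h11'
    rw [count_false_revCompl, count_true_revCompl] at hrc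
    calc w = revCompl (revCompl w) := (revCompl_revCompl w).symm
      _ = chr (w.count false) (w.count true) := by rw [hrc, revCompl_chr]
  · exact desubst w hn hb hu hl hh h11

lemma eq_chr_or_eq_reverse_chr {w : List Bool} (hb : Balanced01 w) (hu : Unbordered w)
    (hw : w ≠ []) : w = chr (w.count false) (w.count true) ∨
      w = (chr (w.count false) (w.count true)).reverse := by
  obtain ⟨c, hc⟩ := Option.isSome_iff_exists.1 (List.getLast?_isSome.2 hw)
  cases c
  · rcases Nat.lt_or_ge w.length 2 with hw1 | hw2
    · obtain ⟨s, rfl⟩ := List.getLast?_eq_some_iff.1 hc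
      obtain rfl : s = [] := by simpa using hw1
      exact Or.inl rfl
    · have := eq_chr_of_balanced_of_unbordered hb.reverse hu.reverse
        (by simpa using hu.head?_eq_not hw2 hc)
      rw [List.count_reverse, List.count_reverse] at this
      exact Or.inr (by rw [← this, List.reverse_reverse])
  · exact Or.inl (eq_chr_of_balanced_of_unbordered hb hu hc)

/-- A word is a primitive (lower or upper) Christoffel word iff it is balanced and
unbordered. -/
theorem stmt7 (w : List Bool) (hw : w ≠ []) :
    (Primitive w ∧ ∃ a b : ℕ, ¬(a = 0 ∧ b = 0) ∧
        (w = chr a b ∨ w = (chr a b).reverse)) ↔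
      Balanced01 w ∧ Unbordered w := by
  constructor
  · rintro ⟨hp, a, b, -, rfl | rfl⟩
    · exact ⟨balanced_chr a b, unbordered_chr (coprime_of_primitive_chr hp)⟩
    · exact ⟨(balanced_chr a b).reverse,
        (unbordered_chr (coprime_of_primitive_chr hp.of_reverse)).reverse⟩
  · rintro ⟨hb, hu⟩
    refine ⟨hu.primitive hw, w.count false, w.count true, fun ⟨h0, h1⟩ => hw ?_,
      eq_chr_or_eq_reverse_chr hb hu hw⟩
    rw [← List.length_eq_zero_iff, ← List.count_true_add_count_false, h0, h1]
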